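/- Periodic-erasure counting bound: Let f_1, f_2, ..., f_m be random variables each with H(f_i) ≤ nR, and let (s_t) be a Markov source such that for each k = 1, ..., K, H(s_{v_k} | f_{A_k}) ≤ nε for disjoint consecutive index sets A_1, ..., A_K whose union has size m, where s_{v_1}, ..., s_{v_K} satisfy H(s_{v_k} | s_{v_{k-1}}) ≥ n h for all k ≥ 2 and form a Markov chain s_{v_1} → s_{v_2} → ... → s_{v_K}. Then m n R ≥ (K−1) n h − K n ε, i.e., R ≥ ((K−1) h − K ε)/m. -/

import Mathlib

open Finset

variable {Ω : Type} [Fintype Ω]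

/-- Probability that the random variable `X` takes value `x`, under weights `μ`. -/
noncomputable def pr (μ : Ω → ℝ) {α : Type} [Fintype α] [DecidableEq α]
    (X : Ω → α) (x : α) : ℝ :=
  ∑ ω, if X ω = x then μ ω else 0

/-- Shannon entropy (base 2) of the random variable `X`. -/
noncomputable def ent (μ : Ω → ℝ) {α : Type} [Fintype α] [DecidableEq α]
    (X : Ω → α) : ℝ :=
  -∑ x, pr μ X x * Real.logb 2 (pr μ X x)

/-- Conditional Shannon entropy `H(X | Y) = H(X, Y) - H(Y)`. -/
noncomputable def centr (μ : Ω → ℝ) {α β : Type} [Fintype α] [DecidableEq α]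
    [Fintype β] [DecidableEq β] (X : Ω → α) (Y : Ω → β) : ℝ :=
  ent μ (fun ω => (X ω, Y ω)) - ent μ Y

/-- Conditional mutual information `I(X ; Y | Z) = H(X|Z) + H(Y|Z) - H(X,Y|Z)`. -/
noncomputable def mi (μ : Ω → ℝ) {α β γ : Type} [Fintype α] [DecidableEq α]
    [Fintype β] [DecidableEq β] [Fintype γ] [DecidableEq γ]
    (X : Ω → α) (Y : Ω → β) (Z : Ω → γ) : ℝ :=
  centr μ X Z + centr μ Y Z - centr μ (fun ω => (X ω, Y ω)) Z

/-- `μ` is a probability mass function on `Ω`. -/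
structure IsPMF (μ : Ω → ℝ) : Prop where
  nonneg : ∀ ω, 0 ≤ μ ω
  sum_one : ∑ ω, μ ω = 1

/-! Chaining the conditional entropies of the sources and using the Markov property gives
`H(s_{v_1}, …, s_{v_K}) ≥ (K - 1) n h`. On the other hand, conditioning on all encoder outputs `f`,
`H(s) ≤ H(s | f) + H(f) ≤ ∑ₖ H(s_{v_k} | f_{A_k}) + ∑ᵢ H(fᵢ) ≤ K n ε + m n R`, since conditional
entropy is subadditive and only grows when one conditions on a function of the condition. Both
facts rest on submodularity of entropy, i.e. Gibbs' inequality. -/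

lemma mul_log_div_le_sub {p q : ℝ} (hp : 0 ≤ p) (hq : 0 ≤ q) (hpq : 0 < p → 0 < q) :
    p * Real.log (q / p) ≤ q - p := by
  rcases hp.eq_or_lt with rfl | hp
  · simpa using hq
  · calc p * Real.log (q / p) ≤ p * (q / p - 1) :=
          mul_le_mul_of_nonneg_left (Real.log_le_sub_one_of_pos (div_pos (hpq hp) hp)) hp.le
      _ = q - p := by field_simp

section Entropy

variable {α β γ : Type} [Fintype α] [DecidableEq α] [Fintype β] [DecidableEq β]
  [Fintype γ] [DecidableEq γ] {μ : Ω → ℝ}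

lemma pr_nonneg (hμ : IsPMF μ) (X : Ω → α) (x : α) : 0 ≤ pr μ X x :=
  Finset.sum_nonneg fun ω _ => by split_ifs <;> simp [hμ.nonneg ω]

lemma le_pr_self (hμ : IsPMF μ) (X : Ω → α) (ω : Ω) : μ ω ≤ pr μ X (X ω) :=
  (Finset.single_le_sum (f := fun ω' => if X ω' = X ω then μ ω' else 0)
    (fun ω' _ => by split_ifs <;> simp [hμ.nonneg ω']) (Finset.mem_univ ω)).trans_eq' (by simp)

lemma pr_le_pr_comp (hμ : IsPMF μ) (X : Ω → α) (g : α → β) (x : α) :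
    pr μ X x ≤ pr μ (fun ω => g (X ω)) (g x) :=
  Finset.sum_le_sum fun ω _ => by
    by_cases hx : X ω = x
    · simp [hx]
    · simp only [hx, if_false]
      split_ifs <;> simp [hμ.nonneg ω]

lemma sum_pr_mul (X : Ω → α) (g : α → ℝ) :
    ∑ x, pr μ X x * g x = ∑ ω, μ ω * g (X ω) := by
  simp only [pr, Finset.sum_mul, ite_mul, zero_mul]
  rw [Finset.sum_comm]
  exact Finset.sum_congr rfl fun ω _ => by simp

lemma sum_pr (hμ : IsPMF μ) (X : Ω → α) : ∑ x, pr μ X x = 1 := by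
  simpa [hμ.sum_one] using sum_pr_mul (μ := μ) X fun _ => 1

lemma sum_pr_prod_fst (X : Ω → α) (Z : Ω → γ) (z : γ) :
    ∑ x, pr μ (fun ω => (X ω, Z ω)) (x, z) = pr μ Z z := by
  simp only [pr, Prod.ext_iff]
  rw [Finset.sum_comm]
  exact Finset.sum_congr rfl fun ω _ => by by_cases hz : Z ω = z <;> simp [hz]

lemma ent_mul_log_two (X : Ω → α) :
    ent μ X * Real.log 2 = -∑ ω, μ ω * Real.log (pr μ X (X ω)) := by
  have hlog2 : Real.log 2 ≠ 0 := (Real.log_pos one_lt_two).ne'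
  rw [← sum_pr_mul X fun x => Real.log (pr μ X x), ent, neg_mul, Finset.sum_mul]
  simp only [Real.logb, mul_assoc, div_mul_cancel₀ _ hlog2]

lemma ent_comp_le (hμ : IsPMF μ) (X : Ω → α) (g : α → β) :
    ent μ (fun ω => g (X ω)) ≤ ent μ X := by
  refine le_of_mul_le_mul_right ?_ (Real.log_pos one_lt_two)
  rw [ent_mul_log_two, ent_mul_log_two, neg_le_neg_iff]
  refine Finset.sum_le_sum fun ω _ => ?_
  rcases (hμ.nonneg ω).eq_or_lt with hzero | hpos
  · simp [← hzero]
  · exact mul_le_mul_of_nonneg_left (Real.log_le_log (hpos.trans_le (le_pr_self hμ X ω))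
      (pr_le_pr_comp hμ X g (X ω))) hpos.le

lemma ent_of_comp_eq_of_comp (hμ : IsPMF μ) {X : Ω → α} {Y : Ω → β} (g : α → β) (g' : β → α)
    (hY : ∀ ω, Y ω = g (X ω)) (hX : ∀ ω, X ω = g' (Y ω)) : ent μ X = ent μ Y := by
  have eY : (fun ω => g (X ω)) = Y := funext fun ω => (hY ω).symm
  have eX : (fun ω => g' (Y ω)) = X := funext fun ω => (hX ω).symm
  exact le_antisymm (eX ▸ ent_comp_le hμ Y g') (eY ▸ ent_comp_le hμ X g)

lemma ent_eq_zero_of_unique [Unique α] (hμ : IsPMF μ) (X : Ω → α) : ent μ X = 0 := by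
  have hpr : ∀ x, pr μ X x = 1 := fun x => by
    rw [← hμ.sum_one, pr]
    exact Finset.sum_congr rfl fun ω _ => by simp [Subsingleton.elim (X ω) x]
  simp [ent, hpr]

lemma centr_nonneg (hμ : IsPMF μ) (X : Ω → α) (W : Ω → β) : 0 ≤ centr μ X W :=
  sub_nonneg.2 (ent_comp_le hμ (fun ω => (X ω, W ω)) Prod.snd)

lemma ent_le_centr_add_ent (hμ : IsPMF μ) (X : Ω → α) (W : Ω → β) :
    ent μ X ≤ centr μ X W + ent μ W := by
  rw [centr, sub_add_cancel]
  exact ent_comp_le hμ (fun ω => (X ω, W ω)) Prod.fst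

lemma centr_of_comp_eq_of_comp (hμ : IsPMF μ) {X : Ω → α} {Y : Ω → β} (W : Ω → γ)
    (g : α → β) (g' : β → α) (hY : ∀ ω, Y ω = g (X ω)) (hX : ∀ ω, X ω = g' (Y ω)) :
    centr μ X W = centr μ Y W := by
  rw [centr, centr, ent_of_comp_eq_of_comp hμ (Y := fun ω => (Y ω, W ω))
    (Prod.map g id) (Prod.map g' id) (fun ω => by simp [hY ω]) (fun ω => by simp [hX ω])]

lemma centr_eq_zero_of_unique [Unique α] (hμ : IsPMF μ) (X : Ω → α) (W : Ω → β) :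
    centr μ X W = 0 := by
  rw [centr, sub_eq_zero]
  exact ent_of_comp_eq_of_comp hμ Prod.snd (fun w => (default, w)) (fun _ => rfl)
    (fun ω => by simp [Subsingleton.elim (X ω) default])

lemma centr_eq_ent_of_unique [Unique β] (hμ : IsPMF μ) (X : Ω → α) (W : Ω → β) :
    centr μ X W = ent μ X := by
  rw [centr, ent_eq_zero_of_unique hμ W, sub_zero]
  exact ent_of_comp_eq_of_comp hμ Prod.fst (fun x => (x, default))
    (fun _ => rfl) (fun ω => by simp [Subsingleton.elim (W ω) default])

-- with the junk value `a / 0 = 0`, `a * a / a = a` holds for every `a`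
lemma sum_pr_mul_pr_div_pr (hμ : IsPMF μ) (X : Ω → α) (Y : Ω → β) (Z : Ω → γ) :
    ∑ v : (α × β) × γ, pr μ (fun ω => (X ω, Z ω)) (v.1.1, v.2)
      * pr μ (fun ω => (Y ω, Z ω)) (v.1.2, v.2) / pr μ Z v.2 = 1 :=
  calc _ = ∑ z, (∑ x, pr μ (fun ω => (X ω, Z ω)) (x, z))
        * (∑ y, pr μ (fun ω => (Y ω, Z ω)) (y, z)) / pr μ Z z := by
        rw [Fintype.sum_prod_type, Finset.sum_comm]
        simp only [Fintype.sum_prod_type, Finset.sum_mul_sum, Finset.sum_div]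
    _ = ∑ z, pr μ Z z := by simp only [sum_pr_prod_fst, mul_self_div_self]
    _ = 1 := sum_pr hμ Z

lemma ent_submodular (hμ : IsPMF μ) (X : Ω → α) (Y : Ω → β) (Z : Ω → γ) :
    ent μ (fun ω => ((X ω, Y ω), Z ω)) + ent μ Z
      ≤ ent μ (fun ω => (X ω, Z ω)) + ent μ (fun ω => (Y ω, Z ω)) := by
  set W := fun ω => ((X ω, Y ω), Z ω)
  set XZ := fun ω => (X ω, Z ω)
  set YZ := fun ω => (Y ω, Z ω)
  -- the law of `W` with `X` and `Y` made conditionally independent given `Z`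
  let q : (α × β) × γ → ℝ := fun v =>
    pr μ XZ (v.1.1, v.2) * pr μ YZ (v.1.2, v.2) / pr μ Z v.2
  have hpos : ∀ v, 0 < pr μ W v → 0 < pr μ XZ (v.1.1, v.2) ∧ 0 < pr μ YZ (v.1.2, v.2) ∧
      0 < pr μ Z v.2 := fun v hv =>
    ⟨hv.trans_le (pr_le_pr_comp hμ W (fun u => (u.1.1, u.2)) v),
      hv.trans_le (pr_le_pr_comp hμ W (fun u => (u.1.2, u.2)) v),
      hv.trans_le (pr_le_pr_comp hμ W Prod.snd v)⟩
  have hgibbs : ∑ ω, μ ω * Real.log (q (W ω) / pr μ W (W ω)) ≤ 0 := by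
    rw [← sum_pr_mul W fun v => Real.log (q v / pr μ W v)]
    calc _ ≤ ∑ v, (q v - pr μ W v) := Finset.sum_le_sum fun v _ =>
            mul_log_div_le_sub (pr_nonneg hμ W v)
              (div_nonneg (mul_nonneg (pr_nonneg hμ _ _) (pr_nonneg hμ _ _)) (pr_nonneg hμ _ _))
              fun hv => by obtain ⟨ha, hb, hc⟩ := hpos v hv; positivity
      _ = 0 := by rw [Finset.sum_sub_distrib, sum_pr_mul_pr_div_pr hμ X Y Z, sum_pr hμ, sub_self]
  have hexpand : ∀ ω, μ ω * Real.log (q (W ω) / pr μ W (W ω)) =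
      μ ω * Real.log (pr μ XZ (XZ ω)) + μ ω * Real.log (pr μ YZ (YZ ω))
        - μ ω * Real.log (pr μ Z (Z ω)) - μ ω * Real.log (pr μ W (W ω)) := fun ω => by
    rcases (hμ.nonneg ω).eq_or_lt with hzero | hμω
    · simp [← hzero]
    have hw := hμω.trans_le (le_pr_self hμ W ω)
    obtain ⟨ha, hb, hc⟩ := hpos (W ω) hw
    simp only [q, ← mul_add, ← mul_sub]
    rw [Real.log_div (by positivity) hw.ne', Real.log_div (by positivity) hc.ne',
      Real.log_mul ha.ne' hb.ne']
  simp only [hexpand, Finset.sum_sub_distrib, Finset.sum_add_distrib] at hgibbs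
  refine le_of_mul_le_mul_right ?_ (Real.log_pos one_lt_two)
  simp only [add_mul, ent_mul_log_two]
  linarith

lemma centr_pair_le (hμ : IsPMF μ) (X : Ω → α) (Y : Ω → β) (W : Ω → γ) :
    centr μ (fun ω => (X ω, Y ω)) W ≤ centr μ X W + centr μ Y W := by
  simp only [centr]
  linarith [ent_submodular hμ X Y W]

lemma centr_le_centr_comp (hμ : IsPMF μ) (X : Ω → α) (W : Ω → β) (g : β → γ) :
    centr μ X W ≤ centr μ X (fun ω => g (W ω)) := by
  have hXW : ent μ (fun ω => ((X ω, W ω), g (W ω))) = ent μ (fun ω => (X ω, W ω)) :=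
    ent_of_comp_eq_of_comp hμ Prod.fst (fun p => (p, g p.2)) (fun _ => rfl) (fun _ => rfl)
  have hW : ent μ (fun ω => (W ω, g (W ω))) = ent μ W :=
    ent_of_comp_eq_of_comp hμ Prod.fst (fun w => (w, g w)) (fun _ => rfl) (fun _ => rfl)
  simp only [centr]
  linarith [ent_submodular hμ X W fun ω => g (W ω)]

lemma centr_pi_le_sum (hμ : IsPMF μ) : ∀ {k : ℕ} (X : Fin k → Ω → α) (W : Ω → β),
    centr μ (fun ω i => X i ω) W ≤ ∑ i, centr μ (X i) W
  | 0, X, W => by simp [centr_eq_zero_of_unique hμ]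
  | k + 1, X, W => by
    rw [centr_of_comp_eq_of_comp hμ (Y := fun ω => (X (Fin.last k) ω, fun i => X i.castSucc ω)) W
      (fun u => (u (Fin.last k), Fin.init u)) (fun p => Fin.snoc (α := fun _ => α) p.2 p.1)
      (fun _ => rfl) (fun ω => (Fin.snoc_init_self fun i => X i ω).symm),
      Fin.sum_univ_castSucc]
    linarith [centr_pair_le hμ (X (Fin.last k)) (fun ω i => X (Fin.castSucc i) ω) W,
      centr_pi_le_sum hμ (fun i => X i.castSucc) W]

lemma ent_pi_le_sum (hμ : IsPMF μ) {k : ℕ} (X : Fin k → Ω → α) :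
    ent μ (fun ω i => X i ω) ≤ ∑ i, ent μ (X i) := by
  simpa only [centr_eq_ent_of_unique hμ] using centr_pi_le_sum hμ X fun _ => ()

lemma ent_pi_eq_sum_centr (hμ : IsPMF μ) (X : ℕ → Ω → α) : ∀ k : ℕ,
    ent μ (fun ω (i : Fin k) => X i ω)
      = ∑ j ∈ Finset.range k, centr μ (X j) (fun ω (i : Fin j) => X i ω)
  | 0 => by simp [ent_eq_zero_of_unique hμ]
  | k + 1 => by
    rw [Finset.sum_range_succ, ← ent_pi_eq_sum_centr hμ X k, centr, add_sub_cancel]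
    exact ent_of_comp_eq_of_comp hμ (fun u => (u (Fin.last k), Fin.init u))
      (fun p => Fin.snoc (α := fun _ => α) p.2 p.1) (fun _ => rfl)
      (fun ω => (Fin.snoc_init_self fun i : Fin (k + 1) => X i ω).symm)

lemma mul_le_ent_pi_of_le_centr (hμ : IsPMF μ) (X : ℕ → Ω → α) {K : ℕ} (hK : 1 ≤ K) {c : ℝ}
    (hc : ∀ k, 1 ≤ k → k < K → c ≤ centr μ (X k) (fun ω (i : Fin k) => X i ω)) :
    ((K : ℝ) - 1) * c ≤ ent μ (fun ω (i : Fin K) => X i ω) := by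
  obtain ⟨K, rfl⟩ := Nat.exists_eq_add_of_le' hK
  rw [ent_pi_eq_sum_centr hμ, Finset.sum_range_succ']
  have hsteps := Finset.card_nsmul_le_sum (Finset.range K) _ c fun j hj =>
    hc (j + 1) (by omega) (by simp only [Finset.mem_range] at hj; omega)
  rw [Finset.card_range, nsmul_eq_mul] at hsteps
  push_cast
  linarith [centr_nonneg hμ (X 0) fun ω (i : Fin 0) => X i ω]

end Entropy

theorem periodic_erasure_counting_bound_general
    {S A : Type} [Fintype S] [DecidableEq S] [Fintype A] [DecidableEq A]
    (μ : Ω → ℝ) (hμ : IsPMF μ)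
    (m K : ℕ) (hK : 1 ≤ K) (n R h ε : ℝ)
    (f : Fin m → Ω → A) (sv : ℕ → Ω → S) (T : ℕ → Finset (Fin m))
    (hrate : ∀ i : Fin m, ent μ (f i) ≤ n * R)
    (hFano : ∀ k < K,
      centr μ (sv k) (fun ω => fun i : {x : Fin m // x ∈ T k} => f i.1 ω) ≤ n * ε)
    (hMarkov : ∀ k, 1 ≤ k → k < K →
      centr μ (sv k) (fun ω => fun i : Fin k => sv i ω)
        = centr μ (sv k) (sv (k - 1)))
    (hgap : ∀ k, 1 ≤ k → k < K → n * h ≤ centr μ (sv k) (sv (k - 1))) :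
    ((K : ℝ) - 1) * n * h - (K : ℝ) * n * ε ≤ (m : ℝ) * n * R := by
  set F : Ω → (Fin m → A) := fun ω i => f i ω
  have hsources : ((K : ℝ) - 1) * (n * h) ≤ ent μ (fun ω (i : Fin K) => sv i ω) :=
    mul_le_ent_pi_of_le_centr hμ sv hK fun k hk hkK =>
      (hgap k hk hkK).trans_eq (hMarkov k hk hkK).symm
  have hdecode : centr μ (fun ω (i : Fin K) => sv i ω) F ≤ K * (n * ε) :=
    calc _ ≤ ∑ i : Fin K, centr μ (sv i) F := centr_pi_le_sum hμ (fun i : Fin K => sv i) F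
      _ ≤ ∑ _i : Fin K, n * ε := Finset.sum_le_sum fun i _ =>
          (centr_le_centr_comp hμ (sv i) F fun v (j : {x // x ∈ T i}) => v j.1).trans
            (hFano i i.isLt)
      _ = K * (n * ε) := by simp
  have hcode : ent μ F ≤ m * (n * R) :=
    calc ent μ F ≤ ∑ i, ent μ (f i) := ent_pi_le_sum hμ f
      _ ≤ ∑ _i : Fin m, n * R := Finset.sum_le_sum fun i _ => hrate i
      _ = m * (n * R) := by simp
  linarith [ent_le_centr_add_ent hμ (fun ω (i : Fin K) => sv i ω) F]

/-- periodic-erasure counting bound. Encoder outputs `f₁,…,f_m`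
each of entropy at most `nR`; disjoint index sets `T k` covering all `m`
indices allow Fano-decoding of `sv k`; the `sv` form a Markov chain with
per-step conditional entropy at least `n h`. Then `m n R ≥ (K−1)n h − K n ε`. -/
theorem periodic_erasure_counting_bound
    {S A : Type} [Fintype S] [DecidableEq S] [Fintype A] [DecidableEq A]
    (μ : Ω → ℝ) (hμ : IsPMF μ)
    (m K : ℕ) (hK : 1 ≤ K) (n R h ε : ℝ)
    (hn : 0 < n) (hR : 0 ≤ R) (hh : 0 ≤ h) (hε : 0 ≤ ε)
    (f : Fin m → Ω → A) (sv : ℕ → Ω → S) (T : ℕ → Finset (Fin m))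
    (hrate : ∀ i : Fin m, ent μ (f i) ≤ n * R)
    (hdisj : ∀ k l, k < K → l < K → k ≠ l → Disjoint (T k) (T l))
    (hcover : ((Finset.range K).biUnion T).card = m)
    (hFano : ∀ k < K,
      centr μ (sv k) (fun ω => fun i : {x : Fin m // x ∈ T k} => f i.1 ω) ≤ n * ε)
    (hMarkov : ∀ k, 1 ≤ k → k < K →
      centr μ (sv k) (fun ω => fun i : Fin k => sv i ω)
        = centr μ (sv k) (sv (k - 1)))
    (hgap : ∀ k, 1 ≤ k → k < K → n * h ≤ centr μ (sv k) (sv (k - 1))) :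
    ((K : ℝ) - 1) * n * h - (K : ℝ) * n * ε ≤ (m : ℝ) * n * R :=
  periodic_erasure_counting_bound_general μ hμ m K hK n R h ε f sv T hrate hFano hMarkov hgap
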